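/- Let m, N ≥ 1, let γ₁, …, γ_{2m} be complex N×N matrices satisfying γ_j·γ_j = -1 and γ_j·γ_k + γ_k·γ_j = 0 for j ≠ k, let λ₁, …, λ_m be nonnegative real numbers, and let τ ∈ ℝ. For a C¹ function g : ℝ^m → ℂ^N define (Dg)(u) := Σ_{j=1}^m √λ_j · ( γ_j.mulVec(∂_j g(u)) + (2πiτ·u_j) · γ_{m+j}.mulVec(g(u)) ), where ∂_j denotes the partial derivative in the j-th coordinate. Then for every f : ℝ^m → ℂ^N of class C² and every u ∈ ℝ^m: (D(Df))(u) = Σ_{j=1}^m λ_j · ( -(∂_j ∂_j f)(u) + 4π²τ²·u_j² · f(u) ) + 2πiτ · Σ_{j=1}^m λ_j · (γ_j·γ_{m+j}).mulVec(f(u)). -/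

import Mathlib

/-!
Write `D = ∑ₐ Γₐ Lₐ` over `a ∈ Fin m ⊕ Fin m`, with `Γ_{inl j} = γⱼ`, `Γ_{inr j} = γ_{m+j}`,
`L_{inl j} = √λⱼ ∂ⱼ` and `L_{inr j} = √λⱼ · 2πiτuⱼ`. The `Lₐ` commute with constant matrices, so
`D² = ∑ₐ ∑_b Γₐ Γ_b Lₐ L_b`. On `C²` functions `Lₐ L_b` is symmetric in `(a, b)` (Schwarz), up to
the canonical commutation relation `[∂ⱼ, 2πiτuⱼ] = 2πiτ`. The Clifford relations cancel the
symmetric off-diagonal terms and turn the diagonal into `-∑ₐ Lₐ²`, the sum of harmonic oscillators;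
the commutator leaves `2πiτ ∑ⱼ λⱼ γⱼ γ_{m+j}`.
-/

/-- The horizontal Dirac-type operator on the Schrödinger representation space:
`(Dg)(u) = ∑_{j<m} √(λ j) • ( γ_j (∂_j g)(u) + (2πiτ u_j) • γ_{m+j} (g u) )`. -/
noncomputable def schroedingerDirac (m N : ℕ) (γ : ℕ → Matrix (Fin N) (Fin N) ℂ)
    (lam : ℕ → ℝ) (τ : ℝ) (g : (Fin m → ℝ) → (Fin N → ℂ)) :
    (Fin m → ℝ) → (Fin N → ℂ) :=
  fun u => ∑ j : Fin m, ((Real.sqrt (lam j) : ℝ) : ℂ) •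
    ((γ (j : ℕ)).mulVec (fderiv ℝ g u (Pi.single j 1)) +
      ((((2 * Real.pi * τ * u j : ℝ) : ℂ) * Complex.I) •
        (γ (m + (j : ℕ))).mulVec (g u)))

open Matrix Complex Real

theorem Finset.sum_sum_eq_sum_diag_of_add_swap_eq_zero {ι M : Type*} [Fintype ι] [AddCommGroup M]
    (F : ι → ι → M) (hF : ∀ a b, a ≠ b → F a b + F b a = 0) :
    ∑ a, ∑ b, F a b = ∑ a, F a a := by
  classical
  let G : ι × ι → M := fun p => if p.1 = p.2 then 0 else F p.1 p.2
  have hG : ∑ p, G p = 0 :=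
    Finset.sum_ninvolution Prod.swap
      (fun p => by
        by_cases h : p.1 = p.2
        · simp [G, h]
        · simp [G, h, Ne.symm h, hF _ _ h])
      (fun p hp h => hp (by simp [G, (congrArg Prod.fst h).symm]))
      (fun _ => Finset.mem_univ _) Prod.swap_swap
  have hsplit : ∀ a b, F a b = (if a = b then F a a else 0) + G (a, b) := by
    intro a b; by_cases h : a = b <;> simp [G, h]
  calc ∑ a, ∑ b, F a b = ∑ a, ∑ b, ((if a = b then F a a else 0) + G (a, b)) :=
        Finset.sum_congr rfl fun a _ => Finset.sum_congr rfl fun b _ => hsplit a b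
    _ = ∑ a, F a a := by
        simp only [Finset.sum_add_distrib, Finset.sum_ite_eq, Finset.mem_univ, if_true,
          ← Fintype.sum_prod_type', hG, add_zero]

def IsCliffordFamily {ι n R : Type*} [Fintype n] [DecidableEq n] [Ring R]
    (Γ : ι → Matrix n n R) : Prop :=
  (∀ a, Γ a * Γ a = -1) ∧ ∀ a b, a ≠ b → Γ a * Γ b + Γ b * Γ a = 0

namespace IsCliffordFamily

variable {ι κ n R : Type*} [Fintype n] [DecidableEq n] [Ring R] {Γ : ι → Matrix n n R}

theorem comp (hΓ : IsCliffordFamily Γ) {e : κ → ι} (he : Function.Injective e) :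
    IsCliffordFamily (Γ ∘ e) :=
  ⟨fun a => hΓ.1 (e a), fun a b hab => hΓ.2 (e a) (e b) (he.ne hab)⟩

theorem sum_sum_mul_mulVec_of_symm [Fintype ι] (hΓ : IsCliffordFamily Γ) (S : ι → ι → n → R)
    (hS : ∀ a b, S a b = S b a) :
    ∑ a, ∑ b, (Γ a * Γ b) *ᵥ S a b = -∑ a, S a a := by
  rw [Finset.sum_sum_eq_sum_diag_of_add_swap_eq_zero]
  · simp [hΓ.1, neg_mulVec]
  · intro a b hab
    rw [hS b a, ← add_mulVec, hΓ.2 a b hab, zero_mulVec]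

end IsCliffordFamily

theorem Complex.ofReal_sqrt_mul_self {x : ℝ} (hx : 0 ≤ x) : (√x : ℂ) * √x = x := by
  rw [← ofReal_mul, Real.mul_self_sqrt hx]

section Calculus

variable {E F : Type*} [NormedAddCommGroup E] [NormedSpace ℝ E] [NormedAddCommGroup F]
  [NormedSpace ℝ F]

theorem HasFDerivAt.matrix_mulVec {n : Type*} [Fintype n] (A : Matrix n n ℂ) {g : E → n → ℂ}
    {g' : E →L[ℝ] n → ℂ} {u : E} (hg : HasFDerivAt g g' u) :
    HasFDerivAt (fun v => A *ᵥ g v)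
      ((LinearMap.toContinuousLinearMap (A.mulVecLin.restrictScalars ℝ)).comp g') u :=
  (LinearMap.toContinuousLinearMap (A.mulVecLin.restrictScalars ℝ)).hasFDerivAt.comp u hg

theorem fderiv_mulVec_apply {n : Type*} [Fintype n] (A : Matrix n n ℂ) {g : E → n → ℂ} {u : E}
    (hg : DifferentiableAt ℝ g u) (w : E) :
    fderiv ℝ (fun v => A *ᵥ g v) u w = A *ᵥ fderiv ℝ g u w := by
  rw [(hg.hasFDerivAt.matrix_mulVec A).fderiv]
  rfl

theorem ContDiffAt.fderiv_fderiv_apply_comm {f : E → F} {x : E} (hf : ContDiffAt ℝ 2 f x)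
    (v w : E) :
    fderiv ℝ (fun y => fderiv ℝ f y v) x w = fderiv ℝ (fun y => fderiv ℝ f y w) x v := by
  have hdf : DifferentiableAt ℝ (fderiv ℝ f) x :=
    (hf.fderiv_right (m := 1) le_rfl).differentiableAt one_ne_zero
  simp only [fderiv_clm_apply hdf (differentiableAt_const _), fderiv_const_apply,
    ContinuousLinearMap.comp_zero, zero_add, ContinuousLinearMap.flip_apply]
  exact hf.isSymmSndFDerivAt (by simp) w v

theorem fderiv_coord_smul_apply {ι : Type*} [Fintype ι] {g : (ι → ℝ) → F} {u : ι → ℝ}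
    (hg : DifferentiableAt ℝ g u) (j : ι) (w : ι → ℝ) :
    fderiv ℝ (fun v => v j • g v) u w = w j • g u + u j • fderiv ℝ g u w := by
  rw [fderiv_fun_smul (hasFDerivAt_apply j u).differentiableAt hg, (hasFDerivAt_apply j u).fderiv]
  simp [add_comm]

end Calculus

section SchroedingerDirac

variable {m N : ℕ}

def diracGamma (m : ℕ) (γ : ℕ → Matrix (Fin N) (Fin N) ℂ) :
    Fin m ⊕ Fin m → Matrix (Fin N) (Fin N) ℂ :=
  fun a => γ (finSumFinEquiv a)

theorem isCliffordFamily_diracGamma {γ : ℕ → Matrix (Fin N) (Fin N) ℂ}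
    (hsq : ∀ j < 2 * m, γ j * γ j = -1)
    (hanti : ∀ j < 2 * m, ∀ k < 2 * m, j ≠ k → γ j * γ k + γ k * γ j = 0) :
    IsCliffordFamily (diracGamma m γ) := by
  have hγ : IsCliffordFamily fun j : Fin (m + m) => γ j :=
    ⟨fun j => hsq j (by omega),
      fun j k hjk => hanti j (by omega) k (by omega) (Fin.val_ne_of_ne hjk)⟩
  exact hγ.comp finSumFinEquiv.injective

noncomputable def diracComponent (lam : ℕ → ℝ) (τ : ℝ) :
    Fin m ⊕ Fin m → ((Fin m → ℝ) → Fin N → ℂ) → (Fin m → ℝ) → Fin N → ℂ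
  | .inl j => fun g u => (√(lam j) : ℂ) • fderiv ℝ g u (Pi.single j 1)
  | .inr j => fun g u => ((√(lam j) : ℂ) * ((2 * π * τ : ℝ) * I)) • (u j • g u)

noncomputable def diracCommutator (lam : ℕ → ℝ) (τ : ℝ) (v : Fin N → ℂ) :
    Fin m ⊕ Fin m → Fin m ⊕ Fin m → Fin N → ℂ
  | .inl k, .inr j => (if k = j then (√(lam k) : ℂ) * √(lam j) * ((2 * π * τ : ℝ) * I) else 0) • v
  | _, _ => 0

variable (lam : ℕ → ℝ) (τ : ℝ) {f : (Fin m → ℝ) → Fin N → ℂ} {u : Fin m → ℝ}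

theorem schroedingerDirac_apply_eq_sum (γ : ℕ → Matrix (Fin N) (Fin N) ℂ)
    (g : (Fin m → ℝ) → Fin N → ℂ) (u : Fin m → ℝ) :
    schroedingerDirac m N γ lam τ g u = ∑ a, diracGamma m γ a *ᵥ diracComponent lam τ a g u := by
  simp only [schroedingerDirac, Fintype.sum_sum_type, diracComponent, diracGamma,
    finSumFinEquiv_apply_left, finSumFinEquiv_apply_right, Fin.val_castAdd, Fin.val_natAdd,
    ← Finset.sum_add_distrib, mulVec_smul]
  refine Finset.sum_congr rfl fun j _ => ?_
  push_cast
  module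

theorem diracComponent_sum_mulVec {ι : Type*} [Fintype ι] (a : Fin m ⊕ Fin m)
    (A : ι → Matrix (Fin N) (Fin N) ℂ) {g : ι → (Fin m → ℝ) → Fin N → ℂ}
    (hg : ∀ b, DifferentiableAt ℝ (g b) u) :
    diracComponent lam τ a (fun v => ∑ b, A b *ᵥ g b v) u =
      ∑ b, A b *ᵥ diracComponent lam τ a (g b) u := by
  cases a with
  | inl j =>
    have hAg : ∀ b, DifferentiableAt ℝ (fun v => A b *ᵥ g b v) u := fun b =>
      ((hg b).hasFDerivAt.matrix_mulVec (A b)).differentiableAt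
    simp only [diracComponent, fderiv_fun_sum fun b _ => hAg b, _root_.sum_apply,
      fderiv_mulVec_apply _ (hg _), mulVec_smul, Finset.smul_sum]
  | inr j => simp only [diracComponent, mulVec_smul, Finset.smul_sum]

theorem ContDiff.diracComponent {k : WithTop ℕ∞} (hf : ContDiff ℝ (k + 1) f)
    (a : Fin m ⊕ Fin m) : ContDiff ℝ k (diracComponent lam τ a f) := by
  cases a with
  | inl j => exact ((hf.fderiv_right le_rfl).clm_apply contDiff_const).const_smul _
  | inr j => exact ((contDiff_apply ℝ ℝ j).smul (hf.of_le le_self_add)).const_smul _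

theorem schroedingerDirac_schroedingerDirac_apply (γ : ℕ → Matrix (Fin N) (Fin N) ℂ)
    (hf : ContDiff ℝ 2 f) (u : Fin m → ℝ) :
    schroedingerDirac m N γ lam τ (schroedingerDirac m N γ lam τ f) u =
      ∑ a, ∑ b, (diracGamma m γ a * diracGamma m γ b) *ᵥ
        diracComponent lam τ a (diracComponent lam τ b f) u := by
  have hLf : ∀ b, DifferentiableAt ℝ (diracComponent lam τ b f) u := fun b =>
    ((hf.diracComponent (k := 1) lam τ b).differentiable one_ne_zero) u
  rw [schroedingerDirac_apply_eq_sum, funext (schroedingerDirac_apply_eq_sum lam τ γ f)]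
  simp only [diracComponent_sum_mulVec _ _ _ _ hLf, mulVec_sum, mulVec_mulVec]

theorem diracComponent_inl_diracComponent_inl (hf : ContDiffAt ℝ 2 f u) (k j : Fin m) :
    diracComponent lam τ (.inl k) (diracComponent lam τ (.inl j) f) u =
      ((√(lam k) : ℂ) * √(lam j)) •
        fderiv ℝ (fun v => fderiv ℝ f v (Pi.single j 1)) u (Pi.single k 1) := by
  have hdf : DifferentiableAt ℝ (fun v => fderiv ℝ f v (Pi.single j 1)) u :=
    ((hf.fderiv_right (m := 1) le_rfl).differentiableAt one_ne_zero).clm_apply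
      (differentiableAt_const _)
  simp only [diracComponent, fderiv_fun_const_smul hdf, _root_.smul_apply, smul_smul]

theorem diracComponent_inl_diracComponent_inr (hf : DifferentiableAt ℝ f u) (k j : Fin m) :
    diracComponent lam τ (.inl k) (diracComponent lam τ (.inr j) f) u =
      diracComponent lam τ (.inr j) (diracComponent lam τ (.inl k) f) u +
        diracCommutator lam τ (f u) (.inl k) (.inr j) := by
  have hjf : DifferentiableAt ℝ (fun v : Fin m → ℝ => v j • f v) u :=
    (hasFDerivAt_apply j u).differentiableAt.smul hf
  simp only [diracComponent, diracCommutator]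
  rw [fderiv_fun_const_smul hjf, _root_.smul_apply, fderiv_coord_smul_apply hf]
  split_ifs with h
  · subst h
    simp only [Pi.single_eq_same, one_smul]
    module
  · simp only [Pi.single_eq_of_ne (Ne.symm h), zero_smul, zero_add, add_zero]
    module

theorem diracComponent_diracComponent_sub_diracCommutator_symm (hf : ContDiffAt ℝ 2 f u)
    (a b : Fin m ⊕ Fin m) :
    diracComponent lam τ a (diracComponent lam τ b f) u - diracCommutator lam τ (f u) a b =
      diracComponent lam τ b (diracComponent lam τ a f) u - diracCommutator lam τ (f u) b a := by
  have hf1 : DifferentiableAt ℝ f u := hf.differentiableAt (by norm_num)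
  rcases a with k | k <;> rcases b with j | j
  · simp only [diracComponent_inl_diracComponent_inl lam τ hf, diracCommutator, sub_zero,
      mul_comm (√(lam k) : ℂ), hf.fderiv_fderiv_apply_comm (Pi.single k 1)]
  · simp only [diracComponent_inl_diracComponent_inr lam τ hf1, diracCommutator,
      add_sub_cancel_right, sub_zero]
  · simp only [diracComponent_inl_diracComponent_inr lam τ hf1, diracCommutator,
      add_sub_cancel_right, sub_zero]
  · simp only [diracComponent, diracCommutator]
    module

theorem diracCommutator_self (v : Fin N → ℂ) (a : Fin m ⊕ Fin m) :
    diracCommutator lam τ v a a = 0 := by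
  cases a <;> rfl

theorem sum_sum_diracGamma_mul_mulVec_diracCommutator (γ : ℕ → Matrix (Fin N) (Fin N) ℂ)
    (hlam : ∀ j < m, 0 ≤ lam j) (v : Fin N → ℂ) :
    ∑ a, ∑ b, (diracGamma m γ a * diracGamma m γ b) *ᵥ diracCommutator lam τ v a b =
      (((2 * π * τ : ℝ) : ℂ) * I) • ∑ j : Fin m, (lam j : ℂ) • (γ j * γ (m + j)) *ᵥ v := by
  have hc : ∀ j : Fin m, (√(lam j) : ℂ) * √(lam j) = lam j := fun j =>
    Complex.ofReal_sqrt_mul_self (hlam j j.isLt)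
  simp only [Fintype.sum_sum_type, diracCommutator, mulVec_zero, Finset.sum_const_zero, add_zero,
    zero_add, mulVec_smul]
  simp only [ite_smul, zero_smul, Finset.sum_ite_eq, Finset.mem_univ, if_true, hc,
    Finset.smul_sum, smul_smul, diracGamma, finSumFinEquiv_apply_left, finSumFinEquiv_apply_right,
    Fin.val_castAdd, Fin.val_natAdd, mul_comm (lam _ : ℂ)]

theorem diracComponent_inl_diracComponent_inl_self {j : Fin m} (hlam : 0 ≤ lam j)
    (hf : ContDiffAt ℝ 2 f u) :
    diracComponent lam τ (.inl j) (diracComponent lam τ (.inl j) f) u =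
      (lam j : ℂ) • fderiv ℝ (fun v => fderiv ℝ f v (Pi.single j 1)) u (Pi.single j 1) := by
  rw [diracComponent_inl_diracComponent_inl lam τ hf, Complex.ofReal_sqrt_mul_self hlam]

theorem diracComponent_inr_diracComponent_inr_self {j : Fin m} (hlam : 0 ≤ lam j)
    (f : (Fin m → ℝ) → Fin N → ℂ) (u : Fin m → ℝ) :
    diracComponent lam τ (.inr j) (diracComponent lam τ (.inr j) f) u =
      -((lam j : ℂ) • (((4 * π ^ 2 * τ ^ 2 * u j ^ 2 : ℝ) : ℂ) • f u)) := by
  simp only [diracComponent, ← Complex.coe_smul, smul_smul, ← neg_smul]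
  congr 1
  push_cast
  linear_combination (4 * π ^ 2 * τ ^ 2 * u j ^ 2 * I ^ 2 : ℂ) * Complex.ofReal_sqrt_mul_self hlam +
    (4 * π ^ 2 * τ ^ 2 * u j ^ 2 * lam j : ℂ) * I_sq

end SchroedingerDirac

theorem schroedingerDirac_sq_general
    (m N : ℕ)
    (γ : ℕ → Matrix (Fin N) (Fin N) ℂ)
    (hsq : ∀ j < 2 * m, γ j * γ j = -1)
    (hanti : ∀ j < 2 * m, ∀ k < 2 * m, j ≠ k → γ j * γ k + γ k * γ j = 0)
    (lam : ℕ → ℝ) (hlam : ∀ j < m, 0 ≤ lam j) (τ : ℝ)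
    (f : (Fin m → ℝ) → (Fin N → ℂ)) (hf : ContDiff ℝ 2 f) (u : Fin m → ℝ) :
    schroedingerDirac m N γ lam τ (schroedingerDirac m N γ lam τ f) u =
      (∑ j : Fin m, ((lam j : ℝ) : ℂ) •
        (-(fderiv ℝ (fun v => fderiv ℝ f v (Pi.single j 1)) u (Pi.single j 1)) +
          (((4 * Real.pi ^ 2 * τ ^ 2 * (u j) ^ 2 : ℝ) : ℂ)) • f u)) +
      ((((2 * Real.pi * τ : ℝ) : ℂ) * Complex.I) •
        ∑ j : Fin m, ((lam j : ℝ) : ℂ) •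
          (γ (j : ℕ) * γ (m + (j : ℕ))).mulVec (f u)) := by
  set T := fun a b => diracComponent lam τ a (diracComponent lam τ b f) u
  set K := diracCommutator lam τ (f u)
  have hsymm : ∀ a b, T a b - K a b = T b a - K b a :=
    diracComponent_diracComponent_sub_diracCommutator_symm lam τ hf.contDiffAt
  calc schroedingerDirac m N γ lam τ (schroedingerDirac m N γ lam τ f) u
      = ∑ a, ∑ b, (diracGamma m γ a * diracGamma m γ b) *ᵥ (T a b - K a b) +
          ∑ a, ∑ b, (diracGamma m γ a * diracGamma m γ b) *ᵥ K a b := by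
        simp only [schroedingerDirac_schroedingerDirac_apply lam τ γ hf, ← Finset.sum_add_distrib,
          ← mulVec_add, sub_add_cancel, T]
    _ = -∑ a, T a a +
          (((2 * π * τ : ℝ) : ℂ) * I) • ∑ j : Fin m, (lam j : ℂ) • (γ j * γ (m + j)) *ᵥ f u := by
        rw [(isCliffordFamily_diracGamma hsq hanti).sum_sum_mul_mulVec_of_symm
            (fun a b => T a b - K a b) hsymm,
          sum_sum_diracGamma_mul_mulVec_diracCommutator lam τ γ hlam]
        simp only [K, diracCommutator_self, sub_zero]
    _ = _ := by
        simp only [Fintype.sum_sum_type, T,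
          diracComponent_inl_diracComponent_inl_self lam τ (hlam _ (Fin.isLt _)) hf.contDiffAt,
          diracComponent_inr_diracComponent_inr_self lam τ (hlam _ (Fin.isLt _)), smul_add,
          smul_neg, Finset.sum_add_distrib, Finset.sum_neg_distrib, neg_add, neg_neg]

theorem schroedingerDirac_sq
    (m N : ℕ) (hm : 1 ≤ m) (hN : 1 ≤ N)
    (γ : ℕ → Matrix (Fin N) (Fin N) ℂ)
    (hsq : ∀ j < 2 * m, γ j * γ j = -1)
    (hanti : ∀ j < 2 * m, ∀ k < 2 * m, j ≠ k → γ j * γ k + γ k * γ j = 0)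
    (lam : ℕ → ℝ) (hlam : ∀ j < m, 0 ≤ lam j) (τ : ℝ)
    (f : (Fin m → ℝ) → (Fin N → ℂ)) (hf : ContDiff ℝ 2 f) (u : Fin m → ℝ) :
    schroedingerDirac m N γ lam τ (schroedingerDirac m N γ lam τ f) u =
      (∑ j : Fin m, ((lam j : ℝ) : ℂ) •
        (-(fderiv ℝ (fun v => fderiv ℝ f v (Pi.single j 1)) u (Pi.single j 1)) +
          (((4 * Real.pi ^ 2 * τ ^ 2 * (u j) ^ 2 : ℝ) : ℂ)) • f u)) +
      ((((2 * Real.pi * τ : ℝ) : ℂ) * Complex.I) •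
        ∑ j : Fin m, ((lam j : ℝ) : ℂ) •
          (γ (j : ℕ) * γ (m + (j : ℕ))).mulVec (f u)) :=
  schroedingerDirac_sq_general m N γ hsq hanti lam hlam τ f hf u
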